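/- In a proper unital *-ring A with A_Σ salient: if a ∈ 𝔠, c ∈ A with a ⪯ c, and b ∈ A with cb = 0, then ab = 0. -/

import Mathlib

open Pointwise

/-- Finite sums of elements of the form `star a * a`. -/
def sSums (A : Type*) [Ring A] [StarRing A] : Set A :=
  (AddSubmonoid.closure {x : A | ∃ a : A, x = star a * a} : Set A)

/-- The *-positive elements. -/
def pos (A : Type*) [Ring A] [StarRing A] : Set A :=
  {a : A | ∃ n : ℕ, 0 < n ∧ n • a ∈ sSums A}

/-- The *-accretive elements. -/
def accr (A : Type*) [Ring A] [StarRing A] : Set A :=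
  {a : A | a + star a ∈ pos A}

/-- The order `a ⪯ b ⟺ b - a ∈ 𝔯`. -/
def ple {A : Type*} [Ring A] [StarRing A] (a b : A) : Prop := b - a ∈ accr A

/-- The cone `𝔠`. -/
def cone (A : Type*) [Ring A] [StarRing A] : Set A :=
  {a : A | ∃ n : ℕ, 0 < n ∧ ple (star a * a) (n • a)}

/-- The ball `𝔅`. -/
def ball (A : Type*) [Ring A] [StarRing A] : Set A :=
  {a : A | ple (star a * a) 1}

/-!
Conjugating `a ⪯ c` and `a^*a ⪯ n a` by `b` and using `cb = 0` gives
`(ab)^*(ab) ⪯ n b^*ab ⪯ n b^*cb = 0`. A sum of squares that is `⪯ 0` has its negative in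
`A_+`, hence (after clearing the multiplicity) in `A_Σ`; salience makes it `0`, and
properness gives `ab = 0`.
-/

section StarOrder

variable {A : Type*} [Ring A] [StarRing A]

lemma star_mul_self_mem_sSums (a : A) : star a * a ∈ sSums A :=
  AddSubmonoid.subset_closure ⟨a, rfl⟩

lemma add_mem_sSums {x y : A} (hx : x ∈ sSums A) (hy : y ∈ sSums A) : x + y ∈ sSums A :=
  AddSubmonoid.add_mem _ hx hy

lemma nsmul_mem_sSums {x : A} (hx : x ∈ sSums A) (n : ℕ) : n • x ∈ sSums A :=
  AddSubmonoid.nsmul_mem _ hx n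

lemma star_mul_mul_mem_sSums (b : A) {x : A} (hx : x ∈ sSums A) :
    star b * x * b ∈ sSums A := by
  let f : A →+ A := (AddMonoidHom.mulRight b).comp (AddMonoidHom.mulLeft (star b))
  suffices h : AddSubmonoid.closure {x : A | ∃ a : A, x = star a * a} ≤
      (AddSubmonoid.closure {x : A | ∃ a : A, x = star a * a}).comap f from h hx
  refine AddSubmonoid.closure_le.2 ?_
  rintro _ ⟨a, rfl⟩
  exact AddSubmonoid.subset_closure ⟨a * b, by simp [f, star_mul, mul_assoc]⟩

lemma add_mem_pos {x y : A} (hx : x ∈ pos A) (hy : y ∈ pos A) : x + y ∈ pos A := by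
  obtain ⟨n, hn, hnx⟩ := hx
  obtain ⟨m, hm, hmy⟩ := hy
  refine ⟨n * m, Nat.mul_pos hn hm, ?_⟩
  have e : (n * m) • (x + y) = m • (n • x) + n • (m • y) := by
    rw [smul_add, smul_smul, smul_smul, Nat.mul_comm m n]
  rw [e]
  exact add_mem_sSums (nsmul_mem_sSums hnx m) (nsmul_mem_sSums hmy n)

lemma nsmul_mem_pos {x : A} (hx : x ∈ pos A) (k : ℕ) : k • x ∈ pos A := by
  obtain ⟨n, hn, hnx⟩ := hx
  exact ⟨n, hn, by rw [smul_comm]; exact nsmul_mem_sSums hnx k⟩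

lemma mem_pos_of_nsmul_mem_pos {x : A} {k : ℕ} (hk : 0 < k) (hx : k • x ∈ pos A) :
    x ∈ pos A := by
  obtain ⟨n, hn, hnx⟩ := hx
  exact ⟨n * k, Nat.mul_pos hn hk, by rwa [mul_smul]⟩

lemma star_mul_mul_mem_pos (b : A) {x : A} (hx : x ∈ pos A) : star b * x * b ∈ pos A := by
  obtain ⟨n, hn, hnx⟩ := hx
  refine ⟨n, hn, ?_⟩
  rw [← smul_mul_assoc, ← mul_smul_comm]
  exact star_mul_mul_mem_sSums b hnx

lemma add_mem_accr {x y : A} (hx : x ∈ accr A) (hy : y ∈ accr A) : x + y ∈ accr A := by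
  have e : x + y + star (x + y) = (x + star x) + (y + star y) := by
    rw [star_add]; abel
  simpa only [accr, Set.mem_ofPred_eq, e] using add_mem_pos hx hy

lemma nsmul_mem_accr {x : A} (hx : x ∈ accr A) (k : ℕ) : k • x ∈ accr A := by
  have e : k • x + star (k • x) = k • (x + star x) := by
    rw [star_nsmul, smul_add]
  simpa only [accr, Set.mem_ofPred_eq, e] using nsmul_mem_pos hx k

lemma star_mul_mul_mem_accr (b : A) {x : A} (hx : x ∈ accr A) :
    star b * x * b ∈ accr A := by
  have e : star b * x * b + star (star b * x * b) = star b * (x + star x) * b := by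
    simp only [star_mul, star_star, mul_add, add_mul, mul_assoc]
  simpa only [accr, Set.mem_ofPred_eq, e] using star_mul_mul_mem_pos b hx

lemma ple.trans {x y z : A} (hxy : ple x y) (hyz : ple y z) : ple x z := by
  have e : z - x = (z - y) + (y - x) := by abel
  rw [ple, e]
  exact add_mem_accr hyz hxy

lemma ple.nsmul {x y : A} (h : ple x y) (n : ℕ) : ple (n • x) (n • y) := by
  rw [ple, ← smul_sub]
  exact nsmul_mem_accr h n

lemma ple.star_mul_mul {x y : A} (h : ple x y) (b : A) :
    ple (star b * x * b) (star b * y * b) := by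
  rw [ple, ← sub_mul, ← mul_sub]
  exact star_mul_mul_mem_accr b h

lemma eq_zero_of_mem_sSums_of_neg_mem_pos (salient : sSums A ∩ (-sSums A) = {0}) {x : A}
    (hx : x ∈ sSums A) (hnx : -x ∈ pos A) : x = 0 := by
  obtain ⟨k, hk, hkx⟩ := hnx
  -- `-x = k • (-x) + (k - 1) • x` writes `-x` as a sum of two elements of `A_Σ`.
  have hneg : -x ∈ sSums A := by
    have e : k • -x + (k - 1) • x = -x := by
      obtain ⟨j, rfl⟩ := Nat.exists_eq_add_of_lt hk
      simp only [zero_add, Nat.add_sub_cancel, smul_neg, succ_nsmul]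
      abel
    rw [← e]
    exact add_mem_sSums hkx (nsmul_mem_sSums hx _)
  have hmem : x ∈ sSums A ∩ (-sSums A) := ⟨hx, Set.mem_neg.mpr hneg⟩
  rwa [salient] at hmem

lemma eq_zero_of_mem_sSums_of_ple_zero (salient : sSums A ∩ (-sSums A) = {0}) {x : A}
    (hx : x ∈ sSums A) (hsa : IsSelfAdjoint x) (h : ple x 0) : x = 0 := by
  have e : 0 - x + star (0 - x) = 2 • -x := by
    rw [star_sub, star_zero, hsa.star_eq, two_nsmul]; abel
  have h2 : 2 • -x ∈ pos A := by rw [← e]; exact h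
  exact eq_zero_of_mem_sSums_of_neg_mem_pos salient hx (mem_pos_of_nsmul_mem_pos two_pos h2)

end StarOrder

theorem stmt10 {A : Type*} [Ring A] [StarRing A]
    (proper : ∀ a : A, star a * a = 0 → a = 0)
    (salient : sSums A ∩ (-sSums A) = {0})
    (a b c : A) (ha : a ∈ cone A) (hac : ple a c) (hcb : c * b = 0) :
    a * b = 0 := by
  obtain ⟨n, -, hna⟩ := ha
  have hx : star (a * b) * (a * b) = star b * (star a * a) * b := by
    simp only [star_mul, mul_assoc]
  have h1 : ple (star (a * b) * (a * b)) (n • (star b * a * b)) := by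
    simpa only [hx, mul_smul_comm, smul_mul_assoc] using hna.star_mul_mul b
  have h2 : ple (n • (star b * a * b)) 0 := by
    simpa only [mul_assoc, hcb, mul_zero, smul_zero] using (hac.star_mul_mul b).nsmul n
  exact proper _ <| eq_zero_of_mem_sSums_of_ple_zero salient (star_mul_self_mem_sSums _)
    (.star_mul_self _) (h1.trans h2)
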